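/- arXiv:2303.08754 — 4 statements merged into one kernel-verified Lean document; each statement's English description precedes it below -/
import Mathlib

section
/- Let Q be the trapezoid with lattice points C = {(0,0),(1,0),(2,0),(0,1),(1,1)}. The rational functions β̃_{(0,0)} = (1-y)(2-x-y)²/(2-y)², β̃_{(1,0)} = 2x(1-y)(2-x-y)/(2-y)², β̃_{(2,0)} = x²(1-y)/(2-y)², β̃_{(0,1)} = y(2-x-y)/(2-y), β̃_{(1,1)} = xy/(2-y) satisfy: (i) Σ_{c∈C} β̃_c = 1 as rational functions; (ii) linear precision: Σ_{c∈C} β̃_c(x,y)·c = (x,y) wherever defined; (iii) β̃_c(x,y) ≥ 0 for every (x,y) in the interior of Q. -/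
namespace Trapezoid

/- With `s = x / (2 - y)` one has `2 - x - y = (2 - y) (1 - s)`, so the first three functions
are `1 - y` times the quadratic Bernstein polynomials in `s` and the last two are `y` times the
linear ones. -/

noncomputable def blending₀₀ (x y : ℝ) : ℝ := (1 - y) * (2 - x - y) ^ 2 / (2 - y) ^ 2

noncomputable def blending₁₀ (x y : ℝ) : ℝ := 2 * x * (1 - y) * (2 - x - y) / (2 - y) ^ 2

noncomputable def blending₂₀ (x y : ℝ) : ℝ := x ^ 2 * (1 - y) / (2 - y) ^ 2

noncomputable def blending₀₁ (x y : ℝ) : ℝ := y * (2 - x - y) / (2 - y)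

noncomputable def blending₁₁ (x y : ℝ) : ℝ := x * y / (2 - y)

variable {x y : ℝ}

theorem blending_sum_eq_one (hy : y ≠ 2) :
    blending₀₀ x y + blending₁₀ x y + blending₂₀ x y + blending₀₁ x y + blending₁₁ x y = 1 := by
  have : 2 - y ≠ 0 := sub_ne_zero.mpr hy.symm
  unfold blending₀₀ blending₁₀ blending₂₀ blending₀₁ blending₁₁
  field_simp
  ring

theorem blending_linear_precision (hy : y ≠ 2) :
    blending₀₀ x y • ((0 : ℝ), (0 : ℝ)) + blending₁₀ x y • ((1 : ℝ), (0 : ℝ)) +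
      blending₂₀ x y • ((2 : ℝ), (0 : ℝ)) + blending₀₁ x y • ((0 : ℝ), (1 : ℝ)) +
      blending₁₁ x y • ((1 : ℝ), (1 : ℝ)) = (x, y) := by
  have : 2 - y ≠ 0 := sub_ne_zero.mpr hy.symm
  unfold blending₀₀ blending₁₀ blending₂₀ blending₀₁ blending₁₁
  simp only [Prod.smul_mk, smul_eq_mul, Prod.mk_add_mk, Prod.mk.injEq]
  constructor <;> field_simp <;> ring

theorem blending_nonneg (hx : 0 < x) (hy : 0 < y) (hy1 : y < 1) (hxy : x + y < 2) :
    0 ≤ blending₀₀ x y ∧ 0 ≤ blending₁₀ x y ∧ 0 ≤ blending₂₀ x y ∧ 0 ≤ blending₀₁ x y ∧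
      0 ≤ blending₁₁ x y := by
  have : 0 < 2 - y := by linarith
  have : 0 < 1 - y := by linarith
  have : 0 < 2 - x - y := by linarith
  unfold blending₀₀ blending₁₀ blending₂₀ blending₀₁ blending₁₁
  refine ⟨?_, ?_, ?_, ?_, ?_⟩ <;> positivity

end Trapezoid

/-- Blending functions with rational linear precision for the trapezoid
`Q = conv{(0,0),(2,0),(0,1),(1,1)}`: sum to one, linear precision (away from `y = 2`),
and nonnegativity on the interior of `Q`. -/
theorem trapezoid_blending_functions (x y : ℝ) :
    (y ≠ 2 →
      ((1 - y) * (2 - x - y) ^ 2 / (2 - y) ^ 2 + 2 * x * (1 - y) * (2 - x - y) / (2 - y) ^ 2 +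
        x ^ 2 * (1 - y) / (2 - y) ^ 2 + y * (2 - x - y) / (2 - y) + x * y / (2 - y) = 1) ∧
      (((1 - y) * (2 - x - y) ^ 2 / (2 - y) ^ 2) • ((0 : ℝ), (0 : ℝ)) +
        (2 * x * (1 - y) * (2 - x - y) / (2 - y) ^ 2) • ((1 : ℝ), (0 : ℝ)) +
        (x ^ 2 * (1 - y) / (2 - y) ^ 2) • ((2 : ℝ), (0 : ℝ)) +
        (y * (2 - x - y) / (2 - y)) • ((0 : ℝ), (1 : ℝ)) +
        (x * y / (2 - y)) • ((1 : ℝ), (1 : ℝ)) = (x, y))) ∧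
    (0 < x → 0 < y → y < 1 → x + y < 2 →
      0 ≤ (1 - y) * (2 - x - y) ^ 2 / (2 - y) ^ 2 ∧
      0 ≤ 2 * x * (1 - y) * (2 - x - y) / (2 - y) ^ 2 ∧
      0 ≤ x ^ 2 * (1 - y) / (2 - y) ^ 2 ∧
      0 ≤ y * (2 - x - y) / (2 - y) ∧
      0 ≤ x * y / (2 - y)) :=
  ⟨fun hy => ⟨Trapezoid.blending_sum_eq_one hy, Trapezoid.blending_linear_precision hy⟩,
    fun hx hy hy1 hxy => Trapezoid.blending_nonneg hx hy hy1 hxy⟩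
end

section
/- With notation as follows: β^i_j : ℝ^{d₁} → ℝ and points b^i_j ∈ ℝ^{d₁} satisfying Σ_{i,j} β^i_j(p)·b^i_j = p, and γ^i_k : ℝ^{d₂} → ℝ and points c^i_k ∈ ℝ^{d₂} satisfying Σ_{i,k} γ^i_k(q)·c^i_k = q; suppose for each i and all (p,q) in a set S, Σ_j β^i_j(p) = Σ_k γ^i_k(q) =: N^i(p,q) ≠ 0. Define β^i_{j,k}(p,q) = β^i_j(p)γ^i_k(q)/N^i(p,q) and m^i_{j,k} = (b^i_j, c^i_k) ∈ ℝ^{d₁}×ℝ^{d₂}. Then linear precision holds: Σ_{i,j,k} β^i_{j,k}(p,q)·m^i_{j,k} = (p,q) for all (p,q) ∈ S. -/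
/-! For fixed `i`, the weights `β i j p * γ i k q / N i (p, q)` have marginals `β i j p` (summing
over `k`) and `γ i k q` (summing over `j`), so each coordinate of the sum collapses to the
linear precision identity of the corresponding factor. -/

open Finset

theorem sum_sum_mul_div_smul_prod {K M₁ M₂ ι κ : Type*} [Field K] [AddCommGroup M₁] [Module K M₁]
    [AddCommGroup M₂] [Module K M₂] [Fintype ι] [Fintype κ] (β : ι → K) (γ : κ → K)
    (u : ι → M₁) (v : κ → M₂) {n : K} (hβ : ∑ j, β j = n) (hγ : ∑ k, γ k = n) (hn : n ≠ 0) :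
    ∑ j, ∑ k, (β j * γ k / n) • (u j, v k) = (∑ j, β j • u j, ∑ k, γ k • v k) := by
  have hrow : ∀ j, ∑ k, β j * γ k / n = β j := fun j => by
    rw [← sum_div, ← mul_sum, hγ, mul_div_cancel_right₀ _ hn]
  have hcol : ∀ k, ∑ j, β j * γ k / n = γ k := fun k => by
    rw [← sum_div, ← sum_mul, hβ, mul_div_cancel_left₀ _ hn]
  ext
  · simp only [Prod.fst_sum, Prod.smul_fst]
    simp_rw [← sum_smul, hrow]
  · simp only [Prod.snd_sum, Prod.smul_snd]
    rw [sum_comm]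
    simp_rw [← sum_smul, hcol]

/-- Linear precision for the blending functions of a toric fiber product: if the two
families of blending functions satisfy linear precision over their point configurations and
the partial sums over the common grading index agree and are nonzero on `S`, then the
products `β i j (p) * γ i k (q) / N i (p, q)` satisfy linear precision over the
concatenated points `(b i j, c i k)`. -/
theorem tfp_blending_linear_precision (r d₁ d₂ : ℕ) (s t : Fin r → ℕ)
    (β : (i : Fin r) → Fin (s i) → (Fin d₁ → ℝ) → ℝ)
    (b : (i : Fin r) → Fin (s i) → (Fin d₁ → ℝ))
    (γ : (i : Fin r) → Fin (t i) → (Fin d₂ → ℝ) → ℝ)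
    (c : (i : Fin r) → Fin (t i) → (Fin d₂ → ℝ))
    (hβ : ∀ p, ∑ i, ∑ j, β i j p • b i j = p)
    (hγ : ∀ q, ∑ i, ∑ k, γ i k q • c i k = q)
    (S : Set ((Fin d₁ → ℝ) × (Fin d₂ → ℝ)))
    (N : Fin r → ((Fin d₁ → ℝ) × (Fin d₂ → ℝ)) → ℝ)
    (hNβ : ∀ i, ∀ pq ∈ S, ∑ j, β i j pq.1 = N i pq)
    (hNγ : ∀ i, ∀ pq ∈ S, ∑ k, γ i k pq.2 = N i pq)
    (hN : ∀ i, ∀ pq ∈ S, N i pq ≠ 0) :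
    ∀ pq ∈ S,
      ∑ i, ∑ j, ∑ k, (β i j pq.1 * γ i k pq.2 / N i pq) • ((b i j, c i k) :
        (Fin d₁ → ℝ) × (Fin d₂ → ℝ)) = pq := by
  intro pq hpq
  calc ∑ i, ∑ j, ∑ k, (β i j pq.1 * γ i k pq.2 / N i pq) • ((b i j, c i k) :
          (Fin d₁ → ℝ) × (Fin d₂ → ℝ))
      = ∑ i, (∑ j, β i j pq.1 • b i j, ∑ k, γ i k pq.2 • c i k) :=
        sum_congr rfl fun i _ => sum_sum_mul_div_smul_prod _ _ _ _
          (hNβ i pq hpq) (hNγ i pq hpq) (hN i pq hpq)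
    _ = (∑ i, ∑ j, β i j pq.1 • b i j, ∑ i, ∑ k, γ i k pq.2 • c i k) :=
        Prod.ext (Prod.fst_sum ..) (Prod.snd_sum ..)
    _ = pq := by rw [hβ, hγ]
end

section
/- For the independence model of two binary random variables: given u ∈ ℝ^{2×2} with all entries positive, the point p̂ with p̂_{jk} = (u_{j\,+}·u_{+\,k})/(u_{++})² is the unique maximizer over the set {p ∈ (0,1)^{2×2} : Σp_{jk}=1, p_{00}p_{11}=p_{01}p_{10}} of the log-likelihood ℓ(p) = Σ_{j,k} u_{jk} log p_{jk}. -/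
/-!
A positive 2 × 2 matrix with total mass one has rank one exactly when it is the product `a j * b k`
of its two marginals, so the independence model is parametrised by pairs `(a, b)` of positive
probability vectors. In these coordinates the log-likelihood separates as
`∑ j, u_{j+} log a_j + ∑ k, u_{+k} log b_k`, and by Gibbs' inequality (from `log t ≤ t - 1`, with
equality only at `t = 1`) each summand is uniquely maximised at the relative marginal frequencies
`a = u_{·+} / u_{++}`, `b = u_{+·} / u_{++}`, whose product is `p̂`.
-/

open Real Finset

lemma mul_log_lt_mul_log_div_add {w x s : ℝ} (hw : 0 < w) (hx : 0 < x) (hs : 0 < s)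
    (hne : x ≠ w / s) : w * log x < w * log (w / s) + (x * s - w) := by
  have hratio : x * s / w ≠ 1 := by
    rwa [Ne, div_eq_one_iff_eq hw.ne', ← eq_div_iff hs.ne']
  calc w * log x = w * log (w / s) + w * log (x * s / w) := by
        rw [← mul_add, ← log_mul (by positivity) (by positivity)]
        field_simp
    _ < w * log (w / s) + w * (x * s / w - 1) := by
        gcongr
        exact log_lt_sub_one_of_pos (by positivity) hratio
    _ = w * log (w / s) + (x * s - w) := by field_simp

lemma mul_log_le_mul_log_div_add {w x s : ℝ} (hw : 0 < w) (hx : 0 < x) (hs : 0 < s) :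
    w * log x ≤ w * log (w / s) + (x * s - w) := by
  rcases eq_or_ne x (w / s) with rfl | hne
  · rw [div_mul_cancel₀ w hs.ne', sub_self, add_zero]
  · exact (mul_log_lt_mul_log_div_add hw hx hs hne).le

section Gibbs

variable {ι : Type*} [Fintype ι] [Nonempty ι] {w x : ι → ℝ} {s : ℝ}

theorem sum_mul_log_lt_sum_mul_log_div (hw : ∀ i, 0 < w i) (hx : ∀ i, 0 < x i)
    (hx1 : ∑ i, x i = 1) (hs : ∑ i, w i = s) (hne : x ≠ fun i => w i / s) :
    ∑ i, w i * log (x i) < ∑ i, w i * log (w i / s) := by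
  have hs_pos : 0 < s := hs ▸ sum_pos (fun i _ => hw i) univ_nonempty
  have hdefect : ∑ i, (x i * s - w i) = 0 := by
    rw [sum_sub_distrib, ← sum_mul, hx1, hs, one_mul, sub_self]
  obtain ⟨i, hi⟩ := Function.ne_iff.1 hne
  calc ∑ i, w i * log (x i) < ∑ i, (w i * log (w i / s) + (x i * s - w i)) :=
        sum_lt_sum (fun i _ => mul_log_le_mul_log_div_add (hw i) (hx i) hs_pos)
          ⟨i, mem_univ i, mul_log_lt_mul_log_div_add (hw i) (hx i) hs_pos hi⟩
    _ = ∑ i, w i * log (w i / s) := by rw [sum_add_distrib, hdefect, add_zero]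

theorem sum_mul_log_le_sum_mul_log_div (hw : ∀ i, 0 < w i) (hx : ∀ i, 0 < x i)
    (hx1 : ∑ i, x i = 1) (hs : ∑ i, w i = s) :
    ∑ i, w i * log (x i) ≤ ∑ i, w i * log (w i / s) := by
  rcases eq_or_ne x (fun i => w i / s) with rfl | hne
  · rfl
  · exact (sum_mul_log_lt_sum_mul_log_div hw hx hx1 hs hne).le

end Gibbs

section ProductModel

variable {ι κ : Type*} [Fintype ι] [Fintype κ]

noncomputable def rowFreq (u : ι → κ → ℝ) (j : ι) : ℝ := (∑ k, u j k) / ∑ j', ∑ k, u j' k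

noncomputable def colFreq (u : ι → κ → ℝ) (k : κ) : ℝ := (∑ j, u j k) / ∑ j, ∑ k', u j k'

lemma sum_sum_mul_log_mul (u : ι → κ → ℝ) {a : ι → ℝ} {b : κ → ℝ} (ha : ∀ j, a j ≠ 0)
    (hb : ∀ k, b k ≠ 0) :
    ∑ j, ∑ k, u j k * log (a j * b k) =
      ∑ j, (∑ k, u j k) * log (a j) + ∑ k, (∑ j, u j k) * log (b k) := by
  simp only [log_mul (ha _) (hb _), mul_add, sum_add_distrib, sum_mul]
  rw [sum_comm (f := fun j k => u j k * log (b k))]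

variable [Nonempty ι] [Nonempty κ] {u : ι → κ → ℝ}

lemma sum_sum_pos (hu : ∀ j k, 0 < u j k) : 0 < ∑ j, ∑ k, u j k :=
  sum_pos (fun j _ => sum_pos (fun k _ => hu j k) univ_nonempty) univ_nonempty

lemma rowFreq_pos (hu : ∀ j k, 0 < u j k) (j : ι) : 0 < rowFreq u j :=
  div_pos (sum_pos (fun k _ => hu j k) univ_nonempty) (sum_sum_pos hu)

lemma colFreq_pos (hu : ∀ j k, 0 < u j k) (k : κ) : 0 < colFreq u k :=
  div_pos (sum_pos (fun j _ => hu j k) univ_nonempty) (sum_sum_pos hu)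

lemma sum_rowFreq (hu : ∀ j k, 0 < u j k) : ∑ j, rowFreq u j = 1 := by
  simp only [rowFreq]
  rw [← sum_div, div_self (sum_sum_pos hu).ne']

lemma sum_colFreq (hu : ∀ j k, 0 < u j k) : ∑ k, colFreq u k = 1 := by
  simp only [colFreq]
  rw [← sum_div, sum_comm, div_self (sum_sum_pos hu).ne']

theorem sum_sum_mul_log_mul_lt_of_ne_freq (hu : ∀ j k, 0 < u j k) {a : ι → ℝ} {b : κ → ℝ}
    (ha : ∀ j, 0 < a j) (ha1 : ∑ j, a j = 1) (hb : ∀ k, 0 < b k) (hb1 : ∑ k, b k = 1)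
    (hne : (fun j k => a j * b k) ≠ fun j k => rowFreq u j * colFreq u k) :
    ∑ j, ∑ k, u j k * log (a j * b k) < ∑ j, ∑ k, u j k * log (rowFreq u j * colFreq u k) := by
  rw [sum_sum_mul_log_mul u (fun j => (ha j).ne') (fun k => (hb k).ne'),
    sum_sum_mul_log_mul u (fun j => (rowFreq_pos hu j).ne') (fun k => (colFreq_pos hu k).ne')]
  have hrow : ∀ j, 0 < ∑ k, u j k := fun j => sum_pos (fun k _ => hu j k) univ_nonempty
  have hcol : ∀ k, 0 < ∑ j, u j k := fun k => sum_pos (fun j _ => hu j k) univ_nonempty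
  have hmarginal : a ≠ rowFreq u ∨ b ≠ colFreq u := by
    contrapose! hne
    rw [hne.1, hne.2]
  rcases hmarginal with hne | hne
  · exact add_lt_add_of_lt_of_le
      (sum_mul_log_lt_sum_mul_log_div hrow ha ha1 rfl hne)
      (sum_mul_log_le_sum_mul_log_div hcol hb hb1 sum_comm)
  · exact add_lt_add_of_le_of_lt
      (sum_mul_log_le_sum_mul_log_div hrow ha ha1 rfl)
      (sum_mul_log_lt_sum_mul_log_div hcol hb hb1 sum_comm hne)

end ProductModel

def independenceModel : Set (Fin 2 → Fin 2 → ℝ) :=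
  {p | (∀ j k, 0 < p j k ∧ p j k < 1) ∧ (∑ j, ∑ k, p j k = 1) ∧
    p 0 0 * p 1 1 = p 0 1 * p 1 0}

lemma lt_one_of_sum_fin_two_eq_one {a : Fin 2 → ℝ} (ha : ∀ i, 0 < a i) (ha1 : ∑ i, a i = 1)
    (i : Fin 2) : a i < 1 := by
  rw [Fin.sum_univ_two] at ha1
  fin_cases i <;> simp <;> linarith [ha 0, ha 1]

lemma eq_mul_marginals_of_mul_eq_mul {p : Fin 2 → Fin 2 → ℝ} (hsum : ∑ j, ∑ k, p j k = 1)
    (hdet : p 0 0 * p 1 1 = p 0 1 * p 1 0) :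
    p = fun j k => (∑ k', p j k') * ∑ j', p j' k := by
  simp only [Fin.sum_univ_two] at hsum
  funext j k
  fin_cases j <;> fin_cases k <;> simp only [Fin.sum_univ_two, Fin.zero_eta, Fin.mk_one]
  · linear_combination hdet - p 0 0 * hsum
  · linear_combination -hdet - p 0 1 * hsum
  · linear_combination -hdet - p 1 0 * hsum
  · linear_combination hdet - p 1 1 * hsum

theorem mem_independenceModel_iff {p : Fin 2 → Fin 2 → ℝ} :
    p ∈ independenceModel ↔ ∃ a b : Fin 2 → ℝ, (∀ j, 0 < a j) ∧ ∑ j, a j = 1 ∧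
      (∀ k, 0 < b k) ∧ ∑ k, b k = 1 ∧ p = fun j k => a j * b k := by
  constructor
  · rintro ⟨hbounds, hsum, hdet⟩
    refine ⟨fun j => ∑ k, p j k, fun k => ∑ j, p j k,
      fun j => sum_pos (fun k _ => (hbounds j k).1) univ_nonempty, hsum,
      fun k => sum_pos (fun j _ => (hbounds j k).1) univ_nonempty, sum_comm.trans hsum,
      eq_mul_marginals_of_mul_eq_mul hsum hdet⟩
  · rintro ⟨a, b, ha, ha1, hb, hb1, rfl⟩
    refine ⟨fun j k => ⟨mul_pos (ha j) (hb k), ?_⟩, ?_, by ring⟩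
    · exact mul_lt_one_of_nonneg_of_lt_one_left (ha j).le
        (lt_one_of_sum_fin_two_eq_one ha ha1 j) (lt_one_of_sum_fin_two_eq_one hb hb1 k).le
    · rw [← sum_mul_sum, ha1, hb1, one_mul]

/-- MLE of the independence model of two binary random variables: the matrix of products of
marginal frequencies is the unique maximizer of the log-likelihood over the independence
model inside the open probability simplex. -/
theorem independence_model_mle (u : Fin 2 → Fin 2 → ℝ) (hu : ∀ j k, 0 < u j k) :
    let M : Set (Fin 2 → Fin 2 → ℝ) :=
      {p | (∀ j k, 0 < p j k ∧ p j k < 1) ∧ (∑ j, ∑ k, p j k = 1) ∧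
        p 0 0 * p 1 1 = p 0 1 * p 1 0}
    let L : (Fin 2 → Fin 2 → ℝ) → ℝ := fun p => ∑ j, ∑ k, u j k * Real.log (p j k)
    let phat : Fin 2 → Fin 2 → ℝ :=
      fun j k => (∑ k', u j k') * (∑ j', u j' k) / (∑ j', ∑ k', u j' k') ^ 2
    phat ∈ M ∧ ∀ p ∈ M, p ≠ phat → L p < L phat := by
  intro M L phat
  have hphat : phat = fun j k => rowFreq u j * colFreq u k := by
    funext j k
    simp only [phat, rowFreq, colFreq]
    ring
  refine ⟨mem_independenceModel_iff.2 ⟨_, _, rowFreq_pos hu, sum_rowFreq hu, colFreq_pos hu,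
    sum_colFreq hu, hphat⟩, ?_⟩
  rintro p hp hne
  obtain ⟨a, b, ha, ha1, hb, hb1, rfl⟩ := mem_independenceModel_iff.1 hp
  rw [hphat] at hne ⊢
  exact sum_sum_mul_log_mul_lt_of_ne_freq hu ha ha1 hb hb1 hne
end

section
/- Let u = (u^i_{j,k})_{i∈[r], j∈[s_i], k∈[t_i]} be positive reals, and write u^i_{j,+} = Σ_k u^i_{j,k}, u^i_{+,k} = Σ_j u^i_{j,k}, u^i_{+,+} = Σ_{j,k} u^i_{j,k}, u^+_{+,+} = Σ_i u^i_{+,+}. Suppose H_B with coefficient vector λ_B and H_C with coefficient vector λ_C are matrices/vectors such that the Horn parametrizations applied to the marginal data vectors give values p̂^i_j := λ^i_j Π_α ((H_B u_B)_α)^{(H_B)_{α,(i,j)}} and q̂^i_k := λ^i_k Π_α ((H_C u_C)_α)^{(H_C)_{α,(i,k)}}, where u_B = (u^i_{j,+}) and u_C = (u^i_{+,k}). Let H be the concatenated Horn matrix of the toric fiber product (columns: stack of the (i,j)-column of H_B, the (i,k)-column of H_C, and minus the i-th column of the simplex Horn matrix H_A) with coefficients λ^i_{j,k} = −λ^i_j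 λ^i_k. Then, assuming all factors appearing are nonzero, the (i,j,k)-coordinate of the Horn parametrization φ_{(H,λ)}(u) equals p̂^i_j · q̂^i_k · (u^+_{+,+}/u^i_{+,+}). -/
/-!
Every block of `H` only sees `u` through a marginal: summing `u` over `k`, over `j`, or
over `j` and `k` turns the first two blocks of `Hu` into `H_B u_B` and `H_C u_C`, and the
last block into `-(H_A m)` for `m i = uⁱ₊₊`. The first two blocks therefore contribute the
monomials of `p̂ⁱⱼ` and `q̂ⁱₖ`; the last row of `H_A` reads off `u⁺₊₊ = ∑ m` and the `i`-th
row `uⁱ₊₊`, so the negated simplex column contributes `-(u⁺₊₊ / uⁱ₊₊)`, whose sign the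
coefficient `-λⁱⱼ λⁱₖ` cancels.
-/

open Finset

section Marginals

variable {ι R : Type*} [Fintype ι] [CommSemiring R] {α β : ι → Type*}
  [∀ i, Fintype (α i)] [∀ i, Fintype (β i)] (u : (i : ι) → α i → β i → R)

theorem sum_sigma_prod_eq_sum_sum_sum {M : Type*} [AddCommMonoid M]
    (f : (i : ι) × (α i × β i) → M) : ∑ c, f c = ∑ i, ∑ j, ∑ k, f ⟨i, j, k⟩ := by
  simp only [Fintype.sum_sigma, Fintype.sum_prod_type]

theorem sum_sigma_prod_mul_eq_sum_mul_sum_snd (w : (i : ι) × α i → R) :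
    ∑ c : (i : ι) × (α i × β i), w ⟨c.1, c.2.1⟩ * u c.1 c.2.1 c.2.2 =
      ∑ c, w c * ∑ k, u c.1 c.2 k := by
  rw [sum_sigma_prod_eq_sum_sum_sum, Fintype.sum_sigma]
  simp only [mul_sum]

theorem sum_sigma_prod_mul_eq_sum_mul_sum_fst (w : (i : ι) × β i → R) :
    ∑ c : (i : ι) × (α i × β i), w ⟨c.1, c.2.2⟩ * u c.1 c.2.1 c.2.2 =
      ∑ c, w c * ∑ j, u c.1 j c.2 := by
  rw [sum_sigma_prod_eq_sum_sum_sum, Fintype.sum_sigma]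
  simp only [mul_sum]
  exact Fintype.sum_congr _ _ fun i => sum_comm

theorem sum_sigma_prod_mul_eq_sum_mul_sum_sum (w : ι → R) :
    ∑ c : (i : ι) × (α i × β i), w c.1 * u c.1 c.2.1 c.2.2 =
      ∑ i, w i * ∑ j, ∑ k, u i j k := by
  simp only [sum_sigma_prod_eq_sum_sum_sum, mul_sum]

end Marginals

section SimplexHorn

def simplexHornMatrix (r : ℕ) : Matrix (Fin (r + 1)) (Fin r) ℤ :=
  fun α i => if (α : ℕ) = (i : ℕ) then 1 else if (α : ℕ) = r then -1 else 0

variable {r : ℕ}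

theorem simplexHornMatrix_castSucc (b i : Fin r) :
    simplexHornMatrix r b.castSucc i = if b = i then 1 else 0 := by
  simp [simplexHornMatrix, Fin.val_eq_val, b.isLt.ne]

theorem simplexHornMatrix_last (i : Fin r) : simplexHornMatrix r (Fin.last r) i = -1 := by
  simp [simplexHornMatrix, i.isLt.ne']

variable {K : Type*} [Field K] (m : Fin r → K)

theorem sum_simplexHornMatrix_castSucc_mul (b : Fin r) :
    ∑ i, (simplexHornMatrix r b.castSucc i : K) * m i = m b := by
  simp [simplexHornMatrix_castSucc]

theorem sum_simplexHornMatrix_last_mul :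
    ∑ i, (simplexHornMatrix r (Fin.last r) i : K) * m i = -∑ i, m i := by
  simp [simplexHornMatrix_last]

theorem prod_neg_simplexHorn_zpow_neg (i : Fin r) :
    ∏ a, (-∑ i', (simplexHornMatrix r a i' : K) * m i') ^ (-simplexHornMatrix r a i) =
      -((∑ i', m i') / m i) := by
  rw [Fin.prod_univ_castSucc, sum_simplexHornMatrix_last_mul, simplexHornMatrix_last]
  simp only [sum_simplexHornMatrix_castSucc_mul]
  simp only [simplexHornMatrix_castSucc]
  rw [Fintype.prod_eq_single i fun b hb => by simp [hb]]
  simp only [if_pos, neg_neg, zpow_neg_one, zpow_one]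
  ring

end SimplexHorn

theorem tfp_horn_parametrization_general (r r₁ r₂ : ℕ) (s t : Fin r → ℕ)
    (HB : Matrix (Fin r₁) ((i : Fin r) × Fin (s i)) ℤ)
    (HC : Matrix (Fin r₂) ((i : Fin r) × Fin (t i)) ℤ)
    (lamB : ((i : Fin r) × Fin (s i)) → ℝ) (lamC : ((i : Fin r) × Fin (t i)) → ℝ)
    (u : (i : Fin r) → Fin (s i) → Fin (t i) → ℝ)
    (uB : ((i : Fin r) × Fin (s i)) → ℝ) (huB : ∀ c, uB c = ∑ k, u c.1 c.2 k)
    (uC : ((i : Fin r) × Fin (t i)) → ℝ) (huC : ∀ c, uC c = ∑ j, u c.1 j c.2) :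
    let HA : Matrix (Fin (r + 1)) (Fin r) ℤ :=
      fun α i => if (α : ℕ) = (i : ℕ) then 1 else if (α : ℕ) = r then -1 else 0
    let H : Matrix (Fin r₁ ⊕ (Fin r₂ ⊕ Fin (r + 1)))
        ((i : Fin r) × (Fin (s i) × Fin (t i))) ℤ :=
      fun α c =>
        Sum.elim (fun a => HB a ⟨c.1, c.2.1⟩)
          (Sum.elim (fun a => HC a ⟨c.1, c.2.2⟩) (fun a => -(HA a c.1))) α
    let lam : ((i : Fin r) × (Fin (s i) × Fin (t i))) → ℝ :=
      fun c => -(lamB ⟨c.1, c.2.1⟩ * lamC ⟨c.1, c.2.2⟩)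
    let Hu : (Fin r₁ ⊕ (Fin r₂ ⊕ Fin (r + 1))) → ℝ :=
      fun α => ∑ c : (i : Fin r) × (Fin (s i) × Fin (t i)),
        (H α c : ℝ) * u c.1 c.2.1 c.2.2
    let phat : (i : Fin r) → Fin (s i) → ℝ :=
      fun i j => lamB ⟨i, j⟩ * ∏ α, (∑ c, (HB α c : ℝ) * uB c) ^ (HB α ⟨i, j⟩)
    let qhat : (i : Fin r) → Fin (t i) → ℝ :=
      fun i k => lamC ⟨i, k⟩ * ∏ α, (∑ c, (HC α c : ℝ) * uC c) ^ (HC α ⟨i, k⟩)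
    ∀ (i : Fin r) (j : Fin (s i)) (k : Fin (t i)),
      lam ⟨i, j, k⟩ * ∏ α, (Hu α) ^ (H α ⟨i, j, k⟩) =
        phat i j * qhat i k *
          ((∑ i', ∑ j', ∑ k', u i' j' k') / (∑ j', ∑ k', u i j' k')) := by
  intro _ H lam Hu phat qhat i j k
  have hB (a) : Hu (.inl a) = ∑ c, (HB a c : ℝ) * uB c :=
    (sum_sigma_prod_mul_eq_sum_mul_sum_snd u fun c => (HB a c : ℝ)).trans (by simp only [huB])
  have hC (a) : Hu (.inr (.inl a)) = ∑ c, (HC a c : ℝ) * uC c :=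
    (sum_sigma_prod_mul_eq_sum_mul_sum_fst u fun c => (HC a c : ℝ)).trans (by simp only [huC])
  have hA (a) : Hu (.inr (.inr a)) =
      -∑ i', (simplexHornMatrix r a i' : ℝ) * ∑ j', ∑ k', u i' j' k' := by
    simp only [Hu, H, Sum.elim_inr, Int.cast_neg, neg_mul, sum_neg_distrib]
    exact congrArg Neg.neg
      (sum_sigma_prod_mul_eq_sum_mul_sum_sum u fun i' => (simplexHornMatrix r a i' : ℝ))
  have hsimplex : ∏ a, Hu (.inr (.inr a)) ^ H (.inr (.inr a)) ⟨i, j, k⟩ =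
      -((∑ i', ∑ j', ∑ k', u i' j' k') / ∑ j', ∑ k', u i j' k') := by
    simp only [hA]
    exact prod_neg_simplexHorn_zpow_neg (fun i' => ∑ j', ∑ k', u i' j' k') i
  rw [Fintype.prod_sum_type, Fintype.prod_sum_type, hsimplex]
  simp only [hB, hC, phat, qhat, lam, H, Sum.elim_inl, Sum.elim_inr]
  ring

/-- The Horn parametrization of the toric fiber product: each coordinate of the Horn
parametrization built from the concatenated Horn matrix (with coefficients
`λ^i_{j,k} = -λ^i_j λ^i_k`) equals `p̂ⁱⱼ · q̂ⁱₖ · (u⁺₊₊ / uⁱ₊₊)`, where `p̂, q̂` are the Horn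
parametrizations of the factors evaluated at the marginal data vectors. -/
theorem tfp_horn_parametrization (r r₁ r₂ : ℕ) (s t : Fin r → ℕ)
    (HB : Matrix (Fin r₁) ((i : Fin r) × Fin (s i)) ℤ)
    (HC : Matrix (Fin r₂) ((i : Fin r) × Fin (t i)) ℤ)
    (lamB : ((i : Fin r) × Fin (s i)) → ℝ) (lamC : ((i : Fin r) × Fin (t i)) → ℝ)
    (u : (i : Fin r) → Fin (s i) → Fin (t i) → ℝ) (hu : ∀ i j k, 0 < u i j k)
    (uB : ((i : Fin r) × Fin (s i)) → ℝ) (huB : ∀ c, uB c = ∑ k, u c.1 c.2 k)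
    (uC : ((i : Fin r) × Fin (t i)) → ℝ) (huC : ∀ c, uC c = ∑ j, u c.1 j c.2)
    (hBnz : ∀ α, (∑ c, (HB α c : ℝ) * uB c) ≠ 0)
    (hCnz : ∀ α, (∑ c, (HC α c : ℝ) * uC c) ≠ 0) :
    let HA : Matrix (Fin (r + 1)) (Fin r) ℤ :=
      fun α i => if (α : ℕ) = (i : ℕ) then 1 else if (α : ℕ) = r then -1 else 0
    let H : Matrix (Fin r₁ ⊕ (Fin r₂ ⊕ Fin (r + 1)))
        ((i : Fin r) × (Fin (s i) × Fin (t i))) ℤ :=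
      fun α c =>
        Sum.elim (fun a => HB a ⟨c.1, c.2.1⟩)
          (Sum.elim (fun a => HC a ⟨c.1, c.2.2⟩) (fun a => -(HA a c.1))) α
    let lam : ((i : Fin r) × (Fin (s i) × Fin (t i))) → ℝ :=
      fun c => -(lamB ⟨c.1, c.2.1⟩ * lamC ⟨c.1, c.2.2⟩)
    let Hu : (Fin r₁ ⊕ (Fin r₂ ⊕ Fin (r + 1))) → ℝ :=
      fun α => ∑ c : (i : Fin r) × (Fin (s i) × Fin (t i)),
        (H α c : ℝ) * u c.1 c.2.1 c.2.2
    let phat : (i : Fin r) → Fin (s i) → ℝ :=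
      fun i j => lamB ⟨i, j⟩ * ∏ α, (∑ c, (HB α c : ℝ) * uB c) ^ (HB α ⟨i, j⟩)
    let qhat : (i : Fin r) → Fin (t i) → ℝ :=
      fun i k => lamC ⟨i, k⟩ * ∏ α, (∑ c, (HC α c : ℝ) * uC c) ^ (HC α ⟨i, k⟩)
    ∀ (i : Fin r) (j : Fin (s i)) (k : Fin (t i)),
      lam ⟨i, j, k⟩ * ∏ α, (Hu α) ^ (H α ⟨i, j, k⟩) =
        phat i j * qhat i k *
          ((∑ i', ∑ j', ∑ k', u i' j' k') / (∑ j', ∑ k', u i j' k')) :=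
  tfp_horn_parametrization_general r r₁ r₂ s t HB HC lamB lamC u uB huB uC huC
end
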